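/- arXiv:2311.07038 — 5 statements merged into one kernel-verified Lean document; each statement's English description precedes it below -/
import Mathlib

section
/- Assume (H1)-(H2), and let x_⋆ ∈ ℝⁿ satisfy x_⋆ ≤ g for all g ∈ Γ. Then R₋(+∞) is order-convex (if x, y ∈ R₋(+∞) and x ≤ z ≤ y then z ∈ R₋(+∞)) and invariant (Φ_t(R₋(+∞)) = R₋(+∞) for all t ∈ ℝ). -/
open Set Metric Filter Topology Pointwise

noncomputable section

abbrev Euc (n : ℕ) := EuclideanSpace ℝ (Fin n)

/-- `Φ` is a continuous flow on `ℝⁿ`. -/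
def IsFlow {n : ℕ} (Φ : ℝ → Euc n → Euc n) : Prop :=
  Continuous (fun p : ℝ × Euc n => Φ p.1 p.2) ∧
  (∀ x, Φ 0 x = x) ∧
  (∀ t s x, Φ t (Φ s x) = Φ (t + s) x)

/-- `Cp` is a closed, solid, salient convex cone. -/
def IsConeOrder {n : ℕ} (Cp : Set (Euc n)) : Prop :=
  IsClosed Cp ∧ (∀ x ∈ Cp, ∀ y ∈ Cp, x + y ∈ Cp) ∧
  (∀ α : ℝ, 0 < α → ∀ x ∈ Cp, α • x ∈ Cp) ∧
  (interior Cp).Nonempty ∧ Cp ∩ (-Cp) = {0}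

/-- `x ≤ y` iff `y - x ∈ C⁺`. -/
def coneLe {n : ℕ} (Cp : Set (Euc n)) (x y : Euc n) : Prop := y - x ∈ Cp

/-- `x < y` iff `y - x ∈ C⁺ \ {0}`. -/
def coneLt {n : ℕ} (Cp : Set (Euc n)) (x y : Euc n) : Prop := y - x ∈ Cp ∧ y ≠ x

/-- `x ≪ y` iff `y - x ∈ Int C⁺`. -/
def coneLL {n : ℕ} (Cp : Set (Euc n)) (x y : Euc n) : Prop := y - x ∈ interior Cp

/-- `S` is unordered: no two distinct points related by `≤`. -/
def Unordered {n : ℕ} (Cp : Set (Euc n)) (S : Set (Euc n)) : Prop :=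
  ∀ x ∈ S, ∀ y ∈ S, x ≠ y → ¬ coneLe Cp x y

/-- (H1): `Φ` is strongly competitive. -/
def StronglyCompetitive {n : ℕ} (Φ : ℝ → Euc n → Euc n) (Cp : Set (Euc n)) : Prop :=
  ∀ t : ℝ, 0 < t → ∀ x y : Euc n,
    (coneLe Cp (Φ t x) (Φ t y) → coneLe Cp x y) ∧
    (coneLt Cp (Φ t x) (Φ t y) → coneLL Cp x y)

/-- `D` is invariant under the flow. -/
def Invariant {n : ℕ} (Φ : ℝ → Euc n → Euc n) (D : Set (Euc n)) : Prop :=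
  ∀ t : ℝ, Φ t '' D = D

/-- (H2): `Γ` is a compact invariant attractor uniformly attracting all compact sets. -/
def Dissipative {n : ℕ} (Φ : ℝ → Euc n → Euc n) (Γ : Set (Euc n)) : Prop :=
  Γ.Nonempty ∧ IsCompact Γ ∧ Invariant Φ Γ ∧
  ∀ N : Set (Euc n), IsCompact N → ∀ ε > 0, ∃ T : ℝ, ∀ t ≥ T, ∀ x ∈ N,
    Metric.infDist (Φ t x) Γ < ε

/-- The ω-limit set of `x`. -/
def omegaSet {n : ℕ} (Φ : ℝ → Euc n → Euc n) (x : Euc n) : Set (Euc n) :=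
  ⋂ t ∈ Ici (0 : ℝ), closure ((fun τ => Φ τ x) '' Ici t)

/-- The α-limit set of `x`. -/
def alphaSet {n : ℕ} (Φ : ℝ → Euc n → Euc n) (x : Euc n) : Set (Euc n) :=
  ⋂ t ∈ Iic (0 : ℝ), closure ((fun τ => Φ τ x) '' Iic t)

/-- The set `R(Φ)` of recurrent points. -/
def recurrentSet {n : ℕ} (Φ : ℝ → Euc n → Euc n) : Set (Euc n) :=
  {x | x ∈ omegaSet Φ x}

/-- The Birkhoff center `𝓑(Φ)`. -/
def birkhoffCenter {n : ℕ} (Φ : ℝ → Euc n → Euc n) : Set (Euc n) :=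
  closure (recurrentSet Φ)

/-- The set `E` of equilibria. -/
def equilibria {n : ℕ} (Φ : ℝ → Euc n → Euc n) : Set (Euc n) :=
  {p | ∀ t : ℝ, Φ t p = p}

/-- `C = C⁺ ∪ (−C⁺)`. -/
def coneC {n : ℕ} (Cp : Set (Euc n)) : Set (Euc n) := Cp ∪ (-Cp)

/-- `K = closure(ℝⁿ \ C)`. -/
def coneK {n : ℕ} (Cp : Set (Euc n)) : Set (Euc n) := closure ((coneC Cp)ᶜ)

/-- The translated cone `C_x = x + C`. -/
def coneCAt {n : ℕ} (Cp : Set (Euc n)) (x : Euc n) : Set (Euc n) := {y | y - x ∈ coneC Cp}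

/-- The translated complementary cone `K_x = x + K`. -/
def coneKAt {n : ℕ} (Cp : Set (Euc n)) (x : Euc n) : Set (Euc n) := {y | y - x ∈ coneK Cp}


/-- The lower boundary `∂₋S`. -/
def lowerBdry {n : ℕ} (Cp : Set (Euc n)) (S : Set (Euc n)) : Set (Euc n) :=
  {z | (∃ u : ℕ → Euc n, (∀ i, u i ∈ S) ∧ Filter.Tendsto u Filter.atTop (nhds z) ∧
          ∀ i, coneLL Cp z (u i)) ∧
       ¬ ∃ v : ℕ → Euc n, (∀ i, v i ∈ S) ∧ Filter.Tendsto v Filter.atTop (nhds z) ∧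
          ∀ i, coneLL Cp (v i) z}

/-- The upper boundary `∂₊S`. -/
def upperBdry {n : ℕ} (Cp : Set (Euc n)) (S : Set (Euc n)) : Set (Euc n) :=
  {z | (∃ v : ℕ → Euc n, (∀ i, v i ∈ S) ∧ Filter.Tendsto v Filter.atTop (nhds z) ∧
          ∀ i, coneLL Cp (v i) z) ∧
       ¬ ∃ u : ℕ → Euc n, (∀ i, u i ∈ S) ∧ Filter.Tendsto u Filter.atTop (nhds z) ∧
          ∀ i, coneLL Cp z (u i)}

/-- The basin of repulsion `R(q)`. -/
def basinRep {n : ℕ} (Φ : ℝ → Euc n → Euc n) (q : Euc n) : Set (Euc n) :=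
  {x | Filter.Tendsto (fun t : ℝ => Φ (-t) x) Filter.atTop (nhds q)}

/-- The basin of lower repulsion `R₋(q)`. -/
def basinRepLower {n : ℕ} (Φ : ℝ → Euc n → Euc n) (Cp : Set (Euc n)) (q : Euc n) :
    Set (Euc n) :=
  {x ∈ basinRep Φ q | ∃ T : ℝ, 0 < T ∧ ∀ t ≥ T, coneLL Cp (Φ (-t) x) q}

/-- The basin of upper repulsion `R₊(q)`. -/
def basinRepUpper {n : ℕ} (Φ : ℝ → Euc n → Euc n) (Cp : Set (Euc n)) (q : Euc n) :
    Set (Euc n) :=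
  {x ∈ basinRep Φ q | ∃ T : ℝ, 0 < T ∧ ∀ t ≥ T, coneLL Cp q (Φ (-t) x)}

/-- `M₋(q) = ∂₋R₋(q)`. -/
def Mminus {n : ℕ} (Φ : ℝ → Euc n → Euc n) (Cp : Set (Euc n)) (q : Euc n) : Set (Euc n) :=
  lowerBdry Cp (basinRepLower Φ Cp q)

/-- `M₊(p) = ∂₊R₊(p)`. -/
def Mplus {n : ℕ} (Φ : ℝ → Euc n → Euc n) (Cp : Set (Euc n)) (p : Euc n) : Set (Euc n) :=
  upperBdry Cp (basinRepUpper Φ Cp p)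

/-- `R(∞) = {x : |Φ_{−t}(x)| → ∞}`. -/
def repInfty {n : ℕ} (Φ : ℝ → Euc n → Euc n) : Set (Euc n) :=
  {x | Filter.Tendsto (fun t : ℝ => ‖Φ (-t) x‖) Filter.atTop Filter.atTop}

/-- `R₋(+∞) = Int R̃₋(+∞)`. -/
def RminusInfty {n : ℕ} (Φ : ℝ → Euc n → Euc n) (Cp : Set (Euc n)) (xlo : Euc n) :
    Set (Euc n) :=
  interior {x ∈ repInfty Φ | ∃ T : ℝ, 0 < T ∧ ∀ t ≥ T, coneLL Cp xlo (Φ (-t) x)}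

/-- `M₋(+∞) = ∂₋R₋(+∞)`. -/
def MminusInfty {n : ℕ} (Φ : ℝ → Euc n → Euc n) (Cp : Set (Euc n)) (xlo : Euc n) :
    Set (Euc n) :=
  lowerBdry Cp (RminusInfty Φ Cp xlo)

/-- `R₊(−∞) = Int R̃₊(−∞)`. -/
def RplusInfty {n : ℕ} (Φ : ℝ → Euc n → Euc n) (Cp : Set (Euc n)) (xhi : Euc n) :
    Set (Euc n) :=
  interior {x ∈ repInfty Φ | ∃ T : ℝ, 0 < T ∧ ∀ t ≥ T, coneLL Cp (Φ (-t) x) xhi}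

/-- `M₊(−∞) = ∂₊R₊(−∞)`. -/
def MplusInfty {n : ℕ} (Φ : ℝ → Euc n → Euc n) (Cp : Set (Euc n)) (xhi : Euc n) :
    Set (Euc n) :=
  upperBdry Cp (RplusInfty Φ Cp xhi)

/-!
Backward monotonicity (H1) makes `R̃₋(+∞)` an upper set for the cone order: if `w ≤ z` then
`x_⋆ ≪ Φ_{-t} w ≤ Φ_{-t} z`, and since a closed salient cone is normal, `|Φ_{-t} w| → ∞` forces
`|Φ_{-t} z| → ∞`. The interior of an upper set is again an upper set, which gives order-convexity.
The conditions defining `R̃₋(+∞)` only concern the tail of the backward orbit, so `R̃₋(+∞)` is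
invariant, and so is its interior because every `Φ_t` is a homeomorphism.
-/

section Cone

lemma mem_interior_of_sub_mem {E : Type*} [TopologicalSpace E] [AddCommGroup E]
    [ContinuousAdd E] {C S : Set E} (hS : ∀ w ∈ S, ∀ z, z - w ∈ C → z ∈ S) {x z : E}
    (hx : x ∈ interior S) (hxz : z - x ∈ C) : z ∈ interior S := by
  have hsub : S + {z - x} ⊆ S := by
    rintro _ ⟨w, hw, _, rfl, rfl⟩
    exact hS w hw _ (by simpa using hxz)
  apply interior_mono hsub (subset_interior_add_left ⟨x, hx, z - x, rfl, _⟩)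
  simp

lemma add_mem_interior_of_add_mem {E : Type*} [TopologicalSpace E] [AddCommGroup E]
    [ContinuousAdd E] {C : Set E} (hadd : ∀ x ∈ C, ∀ y ∈ C, x + y ∈ C) {a b : E}
    (ha : a ∈ interior C) (hb : b ∈ C) : a + b ∈ interior C :=
  mem_interior_of_sub_mem (fun w hw z hzw => by simpa using hadd w hw _ hzw) ha
    (by simpa using hb)

variable {E : Type*} [NormedAddCommGroup E] [NormedSpace ℝ E] [ProperSpace E] {C : Set E}

/-- A closed salient cone is normal. -/
lemma exists_pos_mul_norm_le_of_sub_mem (hCc : IsClosed C)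
    (hCs : ∀ α : ℝ, 0 < α → ∀ x ∈ C, α • x ∈ C) (hCp : C ∩ -C ⊆ {0}) :
    ∃ c > 0, ∀ u ∈ C, ∀ v, v - u ∈ C → c * ‖u‖ ≤ ‖v‖ := by
  -- `c` is the distance from the unit vectors of `C` to the closed cone `-C`.
  have hpos : ∀ u ∈ C ∩ sphere (0 : E) 1, 0 < infDist u (-C) := by
    rintro u ⟨huC, hu1⟩
    have hu0 : u ≠ 0 := ne_zero_of_mem_unit_sphere ⟨u, hu1⟩
    refine (hCc.neg.notMem_iff_infDist_pos ⟨-u, by simpa using huC⟩).1 fun hu => hu0 ?_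
    exact hCp ⟨huC, hu⟩
  obtain ⟨c, hc, hcle⟩ := ((isCompact_sphere (0 : E) 1).inter_left hCc).exists_forall_le'
    (continuous_infDist_pt _).continuousOn hpos
  refine ⟨c, hc, fun u hu v hvu => ?_⟩
  rcases eq_or_ne u 0 with rfl | hu0
  · simp
  have hr : 0 < ‖u‖⁻¹ := inv_pos.2 (norm_pos_iff.2 hu0)
  have hunit : ‖u‖⁻¹ • u ∈ C ∩ sphere (0 : E) 1 :=
    ⟨hCs _ hr u hu, by simp [norm_smul, hu0]⟩
  have hneg : -(‖u‖⁻¹ • (v - u)) ∈ -C := by simpa using hCs _ hr _ hvu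
  have := (hcle _ hunit).trans (infDist_le_dist_of_mem hneg)
  rw [dist_eq_norm, sub_neg_eq_add, ← smul_add, add_sub_cancel, norm_smul, norm_inv,
    norm_norm] at this
  rwa [le_inv_mul_iff₀ (norm_pos_iff.2 hu0), mul_comm] at this

lemma tendsto_norm_atTop_of_sub_mem {ι : Type*} {l : Filter ι} (hCc : IsClosed C)
    (hCs : ∀ α : ℝ, 0 < α → ∀ x ∈ C, α • x ∈ C) (hCp : C ∩ -C ⊆ {0}) {f g : ι → E} (a : E)
    (hf : Tendsto (fun t => ‖f t‖) l atTop) (haf : ∀ᶠ t in l, f t - a ∈ C)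
    (hfg : ∀ᶠ t in l, g t - f t ∈ C) : Tendsto (fun t => ‖g t‖) l atTop := by
  obtain ⟨c, hc, hcle⟩ := exists_pos_mul_norm_le_of_sub_mem hCc hCs hCp
  have hbound : ∀ᶠ t in l, c * (‖f t‖ - ‖a‖) - ‖a‖ ≤ ‖g t‖ := by
    filter_upwards [haf, hfg] with t hat hft
    have hnormal := hcle _ hat (g t - a) (by simpa using hft)
    have := norm_sub_norm_le (f t) a
    have := norm_sub_le (g t) a
    nlinarith
  refine tendsto_atTop_mono' l hbound ?_
  simpa [sub_eq_add_neg] using tendsto_atTop_add_const_right l _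
    ((tendsto_atTop_add_const_right l (-‖a‖) hf).const_mul_atTop hc)

end Cone

lemma exists_pos_forall_ge_iff_eventually {P : ℝ → Prop} :
    (∃ T : ℝ, 0 < T ∧ ∀ t ≥ T, P t) ↔ ∀ᶠ t in atTop, P t := by
  refine ⟨fun ⟨T, _, hT⟩ => eventually_atTop.2 ⟨T, hT⟩, fun h => ?_⟩
  obtain ⟨T, hT⟩ := eventually_atTop.1 h
  exact ⟨max T 1, by positivity, fun t ht => hT t (le_of_max_le_left ht)⟩

section Flow

variable {n : ℕ} {Φ : ℝ → Euc n → Euc n} {Cp : Set (Euc n)}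

namespace IsFlow

lemma apply_apply_neg (hΦ : IsFlow Φ) (t : ℝ) (x : Euc n) : Φ t (Φ (-t) x) = x := by
  rw [hΦ.2.2, add_neg_cancel, hΦ.2.1]

lemma apply_neg_apply (hΦ : IsFlow Φ) (t : ℝ) (x : Euc n) : Φ (-t) (Φ t x) = x := by
  rw [hΦ.2.2, neg_add_cancel, hΦ.2.1]

def homeomorph (hΦ : IsFlow Φ) (t : ℝ) : Euc n ≃ₜ Euc n where
  toFun := Φ t
  invFun := Φ (-t)
  left_inv := hΦ.apply_neg_apply t
  right_inv := hΦ.apply_apply_neg t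
  continuous_toFun := hΦ.1.comp (continuous_const.prodMk continuous_id)
  continuous_invFun := hΦ.1.comp (continuous_const.prodMk continuous_id)

lemma invariant_of_mapsTo (hΦ : IsFlow Φ) {D : Set (Euc n)} (hD : ∀ t, MapsTo (Φ t) D D) :
    Invariant Φ D := fun t =>
  (hD t).image_subset.antisymm fun x hx => ⟨Φ (-t) x, hD (-t) hx, hΦ.apply_apply_neg t x⟩

lemma invariant_interior (hΦ : IsFlow Φ) {D : Set (Euc n)} (hD : Invariant Φ D) :
    Invariant Φ (interior D) := fun t =>
  ((hΦ.homeomorph t).image_interior D).trans (congrArg interior (hD t))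

end IsFlow

lemma StronglyCompetitive.coneLe_apply_neg (hcomp : StronglyCompetitive Φ Cp) (hΦ : IsFlow Φ)
    {t : ℝ} (ht : 0 < t) {x z : Euc n} (h : coneLe Cp x z) :
    coneLe Cp (Φ (-t) x) (Φ (-t) z) :=
  (hcomp t ht _ _).1 (by rwa [hΦ.apply_apply_neg, hΦ.apply_apply_neg])

def RtildeMinusInfty (Φ : ℝ → Euc n → Euc n) (Cp : Set (Euc n)) (xlo : Euc n) :
    Set (Euc n) :=
  {x ∈ repInfty Φ | ∃ T : ℝ, 0 < T ∧ ∀ t ≥ T, coneLL Cp xlo (Φ (-t) x)}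

lemma RminusInfty_eq_interior (xlo : Euc n) :
    RminusInfty Φ Cp xlo = interior (RtildeMinusInfty Φ Cp xlo) :=
  rfl

lemma mem_RtildeMinusInfty_iff {xlo x : Euc n} : x ∈ RtildeMinusInfty Φ Cp xlo ↔
    Tendsto (fun t => ‖Φ (-t) x‖) atTop atTop ∧ ∀ᶠ t in atTop, coneLL Cp xlo (Φ (-t) x) :=
  and_congr Iff.rfl exists_pos_forall_ge_iff_eventually

lemma RtildeMinusInfty.mem_of_coneLe (hΦ : IsFlow Φ) (hC : IsConeOrder Cp)
    (hcomp : StronglyCompetitive Φ Cp) {xlo w z : Euc n} (hw : w ∈ RtildeMinusInfty Φ Cp xlo)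
    (hwz : coneLe Cp w z) : z ∈ RtildeMinusInfty Φ Cp xlo := by
  obtain ⟨hwR, hwlo⟩ := mem_RtildeMinusInfty_iff.1 hw
  have hmono : ∀ᶠ t in atTop, coneLe Cp (Φ (-t) w) (Φ (-t) z) :=
    (eventually_gt_atTop 0).mono fun t ht => hcomp.coneLe_apply_neg hΦ ht hwz
  refine mem_RtildeMinusInfty_iff.2 ⟨?_, ?_⟩
  · exact tendsto_norm_atTop_of_sub_mem hC.1 hC.2.2.1 hC.2.2.2.2.subset xlo hwR
      (hwlo.mono fun t ht => interior_subset ht) hmono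
  · filter_upwards [hwlo, hmono] with t hlo hle
    simpa [coneLL] using add_mem_interior_of_add_mem hC.2.1 hlo hle

lemma RtildeMinusInfty.mapsTo (hΦ : IsFlow Φ) (xlo : Euc n) (s : ℝ) :
    MapsTo (Φ s) (RtildeMinusInfty Φ Cp xlo) (RtildeMinusInfty Φ Cp xlo) := by
  intro x hx
  obtain ⟨hxR, hxlo⟩ := mem_RtildeMinusInfty_iff.1 hx
  have hshift : Tendsto (fun t : ℝ => t - s) atTop atTop :=
    tendsto_atTop_add_const_right _ _ tendsto_id
  have horbit : ∀ t : ℝ, Φ (-t) (Φ s x) = Φ (-(t - s)) x := fun t => by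
    rw [hΦ.2.2, neg_sub, sub_eq_neg_add]
  simp only [mem_RtildeMinusInfty_iff, horbit]
  exact ⟨hxR.comp hshift, hshift.eventually hxlo⟩

end Flow

theorem stmt12_general {n : ℕ} (Φ : ℝ → Euc n → Euc n) (Cp : Set (Euc n))
    (hΦ : IsFlow Φ) (hC : IsConeOrder Cp) (hcomp : StronglyCompetitive Φ Cp)
    (xlo : Euc n) :
    (∀ x ∈ RminusInfty Φ Cp xlo, ∀ y ∈ RminusInfty Φ Cp xlo, ∀ z : Euc n,
      coneLe Cp x z → coneLe Cp z y → z ∈ RminusInfty Φ Cp xlo) ∧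
    Invariant Φ (RminusInfty Φ Cp xlo) := by
  rw [RminusInfty_eq_interior]
  refine ⟨fun x hx _ _ z hxz _ => ?_, ?_⟩
  · exact mem_interior_of_sub_mem (fun _ hw _ => RtildeMinusInfty.mem_of_coneLe hΦ hC hcomp hw)
      hx hxz
  · exact hΦ.invariant_interior (hΦ.invariant_of_mapsTo (RtildeMinusInfty.mapsTo hΦ xlo))

theorem stmt12 {n : ℕ} (Φ : ℝ → Euc n → Euc n) (Cp Γ : Set (Euc n))
    (hΦ : IsFlow Φ) (hC : IsConeOrder Cp) (hcomp : StronglyCompetitive Φ Cp)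
    (hΓ : Dissipative Φ Γ)
    (xlo : Euc n) (hlo : ∀ g ∈ Γ, coneLe Cp xlo g) :
    (∀ x ∈ RminusInfty Φ Cp xlo, ∀ y ∈ RminusInfty Φ Cp xlo, ∀ z : Euc n,
      coneLe Cp x z → coneLe Cp z y → z ∈ RminusInfty Φ Cp xlo) ∧
    Invariant Φ (RminusInfty Φ Cp xlo) :=
  stmt12_general Φ Cp hΦ hC hcomp xlo
end
end

section
/- Assume (H1)-(H2), and let x_⋆ ∈ ℝⁿ satisfy x_⋆ ≤ g for all g ∈ Γ. Then M₋(+∞) is invariant (Φ_t(M₋(+∞)) = M₋(+∞) for all t ∈ ℝ) and unordered. -/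
open Set Metric Filter Topology Pointwise

noncomputable section

-- auxiliary
section Aux

variable {n : ℕ} {Φ : ℝ → Euc n → Euc n} {Cp : Set (Euc n)} {xlo : Euc n}

def Rtil (Φ : ℝ → Euc n → Euc n) (Cp : Set (Euc n)) (xlo : Euc n) : Set (Euc n) :=
  {x ∈ repInfty Φ | ∃ T : ℝ, 0 < T ∧ ∀ t ≥ T, coneLL Cp xlo (Φ (-t) x)}

lemma Rminus_eq : RminusInfty Φ Cp xlo = interior (Rtil Φ Cp xlo) := rfl

lemma l_cancel (hΦ : IsFlow Φ) (t : ℝ) (x : Euc n) : Φ t (Φ (-t) x) = x := by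
  rw [hΦ.2.2, add_neg_cancel, hΦ.2.1]

lemma l_cancel' (hΦ : IsFlow Φ) (t : ℝ) (x : Euc n) : Φ (-t) (Φ t x) = x := by
  rw [hΦ.2.2, neg_add_cancel, hΦ.2.1]

lemma l_cont (hΦ : IsFlow Φ) (t : ℝ) : Continuous (Φ t) :=
  hΦ.1.comp (continuous_const.prodMk continuous_id)

lemma l_int_smul (hC : IsConeOrder Cp) {α : ℝ} (hα : 0 < α) {x : Euc n}
    (hx : x ∈ interior Cp) : α • x ∈ interior Cp := by
  have h1 : α • x ∈ α • interior Cp := Set.smul_mem_smul_set hx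
  rw [← interior_smul₀ hα.ne' Cp] at h1
  refine interior_mono ?_ h1
  rintro y ⟨z, hz, rfl⟩
  exact hC.2.2.1 α hα z hz

lemma l_int_add (hC : IsConeOrder Cp) {a b : Euc n} (ha : a ∈ interior Cp)
    (hb : b ∈ Cp) : a + b ∈ interior Cp := by
  have h1 : a + b ∈ (· + b) '' interior Cp := ⟨a, ha, rfl⟩
  have h2 : IsOpen ((· + b) '' interior Cp) := (isOpenMap_add_right b) _ isOpen_interior
  have h3 : (· + b) '' interior Cp ⊆ Cp := by
    rintro y ⟨z, hz, rfl⟩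
    exact hC.2.1 z (interior_subset hz) b hb
  exact interior_maximal h3 h2 h1

set_option maxHeartbeats 1600000 in
lemma l_kappa (hC : IsConeOrder Cp) :
    ∃ κ : ℝ, 0 < κ ∧ ∀ a ∈ Cp, ∀ b ∈ Cp, κ * ‖a‖ ≤ ‖a + b‖ := by
  have h0Cp : (0 : Euc n) ∈ Cp := by
    have := hC.2.2.2.2
    have : (0 : Euc n) ∈ Cp ∩ (-Cp) := by rw [this]; rfl
    exact this.1
  by_cases hA : ∃ a ∈ Cp, a ≠ 0
  · obtain ⟨a0, ha0, ha0ne⟩ := hA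
    set K : Set (Euc n × Euc n) :=
      {p | p.1 ∈ Cp ∧ p.2 ∈ Cp ∧ ‖p.1‖ = 1 ∧ ‖p.2‖ ≤ 1} with hK
    have hKc : IsCompact K := by
      rw [isCompact_iff_isClosed_bounded]
      constructor
      · apply IsClosed.inter (hC.1.preimage continuous_fst)
        apply IsClosed.inter (hC.1.preimage continuous_snd)
        exact IsClosed.inter (isClosed_eq (continuous_norm.comp continuous_fst) continuous_const)
          (isClosed_le (continuous_norm.comp continuous_snd) continuous_const)
      · apply Bornology.IsBounded.subset (Metric.isBounded_closedBall (x := (0 : Euc n × Euc n)) (r := 1))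
        rintro p ⟨_, _, h1, h2⟩
        simp only [Metric.mem_closedBall, dist_zero_right, Prod.norm_def]
        exact max_le h1.le h2
    have hKne : K.Nonempty := by
      refine ⟨(‖a0‖⁻¹ • a0, 0), hC.2.2.1 _ (inv_pos.2 (norm_pos_iff.2 ha0ne)) _ ha0, h0Cp, ?_, by simp⟩
      rw [norm_smul, norm_inv, norm_norm, inv_mul_cancel₀ (norm_ne_zero_iff.2 ha0ne)]
    obtain ⟨p0, hp0K, hp0min⟩ := hKc.exists_isMinOn hKne
      ((continuous_fst.add continuous_snd).norm).continuousOn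
    set κ := ‖p0.1 + p0.2‖ with hκdef
    have hκpos : 0 < κ := by
      rcases (norm_nonneg (p0.1 + p0.2)).lt_or_eq with h | h
      · exact h
      · exfalso
        have hsum : p0.1 + p0.2 = 0 := by
          rw [← norm_eq_zero]; exact h.symm ▸ rfl
        have h1 : p0.1 ∈ Cp ∩ (-Cp) := by
          refine ⟨hp0K.1, ?_⟩
          rw [Set.mem_neg]
          rw [show -p0.1 = p0.2 from neg_eq_of_add_eq_zero_right hsum]
          exact hp0K.2.1
        rw [hC.2.2.2.2] at h1
        have : ‖p0.1‖ = 0 := by rw [h1]; simp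
        rw [hp0K.2.2.1] at this; norm_num at this
    refine ⟨κ, hκpos, ?_⟩
    intro a ha b hb
    rcases eq_or_ne a 0 with rfl | hane
    · simp [norm_nonneg]
    have hapos : 0 < ‖a‖ := norm_pos_iff.2 hane
    set c := max ‖a‖ ‖b‖ with hc
    have hcpos : 0 < c := lt_of_lt_of_le hapos (le_max_left _ _)
    have hca : ‖a‖ ≤ c := le_max_left _ _
    have key : κ * c ≤ ‖a + b‖ := by
      rcases le_total ‖b‖ ‖a‖ with hba | hab
      · have hceq : c = ‖a‖ := max_eq_left hba
        have hmem : (c⁻¹ • a, c⁻¹ • b) ∈ K := by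
          refine ⟨hC.2.2.1 _ (by positivity) _ ha, hC.2.2.1 _ (by positivity) _ hb, ?_, ?_⟩
          · rw [norm_smul, norm_inv, Real.norm_eq_abs, abs_of_pos hcpos, hceq,
              inv_mul_cancel₀ hapos.ne']
          · rw [norm_smul, norm_inv, Real.norm_eq_abs, abs_of_pos hcpos]
            rw [inv_mul_le_iff₀ hcpos, mul_one, hceq]; exact hba
        have h' := isMinOn_iff.1 hp0min _ hmem
        have this : κ ≤ ‖c⁻¹ • a + c⁻¹ • b‖ := by simpa using h'
        have heq : ‖c⁻¹ • a + c⁻¹ • b‖ = c⁻¹ * ‖a + b‖ := by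
          rw [← smul_add, norm_smul, norm_inv, Real.norm_eq_abs, abs_of_pos hcpos]
        rw [heq] at this
        calc κ * c ≤ (c⁻¹ * ‖a + b‖) * c := by
              apply mul_le_mul_of_nonneg_right this hcpos.le
          _ = ‖a + b‖ := by field_simp
      · have hceq : c = ‖b‖ := max_eq_right hab
        have hbpos : 0 < ‖b‖ := lt_of_lt_of_le hapos hab
        have hmem : (c⁻¹ • b, c⁻¹ • a) ∈ K := by
          refine ⟨hC.2.2.1 _ (by positivity) _ hb, hC.2.2.1 _ (by positivity) _ ha, ?_, ?_⟩
          · rw [norm_smul, norm_inv, Real.norm_eq_abs, abs_of_pos hcpos, hceq,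
              inv_mul_cancel₀ hbpos.ne']
          · rw [norm_smul, norm_inv, Real.norm_eq_abs, abs_of_pos hcpos]
            rw [inv_mul_le_iff₀ hcpos, mul_one, hceq]; exact hab
        have h' := isMinOn_iff.1 hp0min _ hmem
        have this : κ ≤ ‖c⁻¹ • b + c⁻¹ • a‖ := by simpa using h'
        have heq : ‖c⁻¹ • b + c⁻¹ • a‖ = c⁻¹ * ‖a + b‖ := by
          rw [← smul_add, norm_smul, norm_inv, Real.norm_eq_abs, abs_of_pos hcpos, add_comm]
        rw [heq] at this
        calc κ * c ≤ (c⁻¹ * ‖a + b‖) * c := by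
              apply mul_le_mul_of_nonneg_right this hcpos.le
          _ = ‖a + b‖ := by field_simp
    calc κ * ‖a‖ ≤ κ * c := by apply mul_le_mul_of_nonneg_left hca hκpos.le
      _ ≤ ‖a + b‖ := key
  · push_neg at hA
    exact ⟨1, one_pos, fun a ha b hb => by rw [hA a ha]; simp [norm_nonneg]⟩


lemma l_ll_lt (h0 : (0:Euc n) ∉ interior Cp) {x y : Euc n} (h : coneLL Cp x y) :
    coneLt Cp x y := by
  refine ⟨interior_subset h, fun he => h0 ?_⟩
  have h' : y - x ∈ interior Cp := h
  rwa [he, sub_self] at h'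

lemma l_back (hΦ : IsFlow Φ) (hcomp : StronglyCompetitive Φ Cp) {t : ℝ} (ht : 0 < t)
    {x y : Euc n} (h : coneLt Cp x y) : coneLL Cp (Φ (-t) x) (Φ (-t) y) := by
  apply (hcomp t ht (Φ (-t) x) (Φ (-t) y)).2
  rwa [l_cancel hΦ, l_cancel hΦ]

lemma l_Rt_inv (hΦ : IsFlow Φ) (s : ℝ) {x : Euc n} (hx : x ∈ Rtil Φ Cp xlo) :
    Φ s x ∈ Rtil Φ Cp xlo := by
  obtain ⟨hrep, T, hT, hll⟩ := hx
  have key : ∀ t : ℝ, Φ (-t) (Φ s x) = Φ (-(t - s)) x := by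
    intro t; rw [hΦ.2.2]; ring_nf
  constructor
  · have h1 : Tendsto (fun t : ℝ => t - s) atTop atTop :=
      tendsto_atTop_add_const_right atTop (-s) tendsto_id
    have h2 := (Tendsto.comp (f := fun t : ℝ => t - s) hrep h1)
    refine h2.congr fun t => ?_
    simp only [Function.comp_apply]
    rw [key t]
  · refine ⟨T + |s|, by positivity, fun t ht => ?_⟩
    rw [show (coneLL Cp xlo (Φ (-t) (Φ s x))) = coneLL Cp xlo (Φ (-(t - s)) x) from by rw [key t]]
    apply hll
    have := abs_nonneg s
    have := le_abs_self s
    linarith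

lemma l_key (hΦ : IsFlow Φ) (hC : IsConeOrder Cp) (hcomp : StronglyCompetitive Φ Cp)
    (h0 : (0:Euc n) ∉ interior Cp) {x y : Euc n}
    (hx : x ∈ closure (Rtil Φ Cp xlo)) (hxy : coneLL Cp x y) :
    y ∈ RminusInfty Φ Cp xlo := by
  obtain ⟨κ, hκ, hκle⟩ := l_kappa hC
  obtain ⟨ρ, hρ, hball⟩ := Metric.isOpen_iff.1 isOpen_interior _ hxy
  obtain ⟨x', hx'Rt, hx'd⟩ := Metric.mem_closure_iff.1 hx ρ hρ
  have hx'y : coneLL Cp x' y := by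
    apply hball
    rw [mem_ball, dist_sub_left, dist_comm]
    exact hx'd
  obtain ⟨hx'rep, T, hT, hTll⟩ := hx'Rt
  set t0 := T + 1 with ht0def
  have ht0 : 0 < t0 := by linarith
  have h1 : coneLL Cp (Φ (-t0) x') (Φ (-t0) y) := l_back hΦ hcomp ht0 (l_ll_lt h0 hx'y)
  have hmain : ∀ y' : Euc n, coneLL Cp (Φ (-t0) x') (Φ (-t0) y') →
      ∀ t ≥ t0, coneLL Cp (Φ (-t) x') (Φ (-t) y') := by
    intro y' h t ht
    rcases eq_or_lt_of_le ht with h' | h'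
    · rwa [← h']
    · have h2 := l_back hΦ hcomp (show (0:ℝ) < t - t0 by linarith) (l_ll_lt h0 h)
      rw [hΦ.2.2, hΦ.2.2] at h2
      rwa [show -(t - t0) + -t0 = -t by ring] at h2
  rw [Rminus_eq]
  apply mem_interior.2
  refine ⟨(fun y' => Φ (-t0) y' - Φ (-t0) x') ⁻¹' (interior Cp), ?_, ?_, h1⟩
  · intro y' hy'
    have hll : ∀ t ≥ t0, coneLL Cp (Φ (-t) x') (Φ (-t) y') := hmain y' hy'
    have hTle : ∀ t : ℝ, t ≥ t0 → t ≥ T := fun t ht => by linarith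
    constructor
    · have hx'rep' : Tendsto (fun t : ℝ => ‖Φ (-t) x'‖) atTop atTop := hx'rep
      have hf : Tendsto (fun t : ℝ => κ * ‖Φ (-t) x'‖ + -(κ * ‖xlo‖ + ‖xlo‖)) atTop atTop :=
        tendsto_atTop_add_const_right atTop _ (hx'rep'.const_mul_atTop hκ)
      apply tendsto_atTop_mono' atTop ?_ hf
      filter_upwards [eventually_ge_atTop t0] with t ht
      have h2 := hll t ht
      have h3 := hTll t (hTle t ht)
      have ha : Φ (-t) x' - xlo ∈ Cp := interior_subset h3
      have hb : Φ (-t) y' - Φ (-t) x' ∈ Cp := interior_subset h2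
      have h4 := hκle _ ha _ hb
      rw [sub_add_sub_cancel'] at h4
      have h5 : ‖Φ (-t) x'‖ - ‖xlo‖ ≤ ‖Φ (-t) x' - xlo‖ := norm_sub_norm_le _ _
      have h6 : ‖Φ (-t) y' - xlo‖ ≤ ‖Φ (-t) y'‖ + ‖xlo‖ := norm_sub_le _ _
      have h7 : κ * (‖Φ (-t) x'‖ - ‖xlo‖) ≤ κ * ‖Φ (-t) x' - xlo‖ :=
        mul_le_mul_of_nonneg_left h5 hκ.le
      linarith
    · refine ⟨t0, ht0, fun t ht => ?_⟩
      have h2 := l_int_add hC (hll t ht) (interior_subset (hTll t (hTle t ht)))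
      rwa [sub_add_sub_cancel] at h2
  · exact IsOpen.preimage ((l_cont hΦ (-t0)).sub continuous_const) isOpen_interior

lemma l_S_inv (hΦ : IsFlow Φ) (s : ℝ) {x : Euc n} (hx : x ∈ RminusInfty Φ Cp xlo) :
    Φ s x ∈ RminusInfty Φ Cp xlo := by
  rw [Rminus_eq] at hx ⊢
  obtain ⟨U, hU, hUo, hxU⟩ := mem_interior.1 hx
  apply mem_interior.2
  refine ⟨Φ (-s) ⁻¹' U, ?_, hUo.preimage (l_cont hΦ (-s)), ?_⟩
  · intro y hy
    have : Φ s (Φ (-s) y) ∈ Rtil Φ Cp xlo := l_Rt_inv hΦ s (hU hy)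
    rwa [l_cancel hΦ] at this
  · show Φ (-s) (Φ s x) ∈ U
    rwa [l_cancel' hΦ]

lemma l_tend {z e : Euc n} (c : ℝ) :
    Tendsto (fun i : ℕ => z + (c / ((i:ℝ)+1)) • e) atTop (nhds z) := by
  have h1 : Tendsto (fun i : ℕ => c / ((i:ℝ)+1)) atTop (nhds 0) := by
    have := tendsto_one_div_add_atTop_nhds_zero_nat.const_mul c
    simpa [div_eq_mul_inv, one_div, mul_comm] using this
  have h2 : Tendsto (fun i : ℕ => (c / ((i:ℝ)+1)) • e) atTop (nhds ((0:ℝ) • e)) :=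
    h1.smul_const e
  rw [zero_smul] at h2
  simpa using tendsto_const_nhds.add h2

lemma l_seq_above (hΦ : IsFlow Φ) (hC : IsConeOrder Cp) (hcomp : StronglyCompetitive Φ Cp)
    (h0 : (0:Euc n) ∉ interior Cp) {z : Euc n} (hz : z ∈ closure (Rtil Φ Cp xlo)) :
    ∃ u : ℕ → Euc n, (∀ i, u i ∈ RminusInfty Φ Cp xlo) ∧ Tendsto u atTop (nhds z) ∧
      ∀ i, coneLL Cp z (u i) := by
  obtain ⟨e, he⟩ := hC.2.2.2.1
  have hll : ∀ i : ℕ, coneLL Cp z (z + ((1:ℝ) / ((i:ℝ)+1)) • e) := by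
    intro i
    show z + ((1:ℝ)/((i:ℝ)+1)) • e - z ∈ interior Cp
    rw [add_sub_cancel_left]
    exact l_int_smul hC (by positivity) he
  exact ⟨fun i => z + ((1:ℝ)/((i:ℝ)+1)) • e,
    fun i => l_key hΦ hC hcomp h0 hz (hll i), l_tend 1, hll⟩

lemma l_M_sub {z : Euc n} (hz : z ∈ MminusInfty Φ Cp xlo) : z ∈ closure (Rtil Φ Cp xlo) := by
  obtain ⟨⟨u, huS, hut, _⟩, _⟩ := hz
  exact mem_closure_of_tendsto hut (Eventually.of_forall fun i => interior_subset (huS i))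

lemma l_M_not_S (hC : IsConeOrder Cp) {z : Euc n} (hz : z ∈ MminusInfty Φ Cp xlo) :
    z ∉ RminusInfty Φ Cp xlo := by
  intro hzS
  apply hz.2
  obtain ⟨e, he⟩ := hC.2.2.2.1
  obtain ⟨ε, hε, hball⟩ := Metric.isOpen_iff.1 isOpen_interior z hzS
  set c := ε / (2 * (‖e‖ + 1)) with hcdef
  have hc : 0 < c := by positivity
  refine ⟨fun i => z - (c / ((i:ℝ)+1)) • e, fun i => ?_, ?_, fun i => ?_⟩
  · apply hball
    rw [mem_ball, dist_eq_norm]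
    have hpos : (0:ℝ) < c / ((i:ℝ)+1) := by positivity
    have h1 : ‖z - (c / ((i:ℝ)+1)) • e - z‖ = (c / ((i:ℝ)+1)) * ‖e‖ := by
      rw [sub_sub_cancel_left, norm_neg, norm_smul, Real.norm_eq_abs, abs_of_pos hpos]
    rw [h1]
    have h2 : c / ((i:ℝ)+1) ≤ c := by
      rw [div_le_iff₀ (by positivity)]
      nlinarith [Nat.cast_nonneg (α := ℝ) i]
    have h3 : c * ‖e‖ < ε := by
      rw [hcdef, div_mul_eq_mul_div, div_lt_iff₀ (by positivity)]
      nlinarith [norm_nonneg e]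
    calc (c / ((i:ℝ)+1)) * ‖e‖ ≤ c * ‖e‖ :=
          mul_le_mul_of_nonneg_right h2 (norm_nonneg e)
      _ < ε := h3
  · have := l_tend (z := z) (e := -e) c
    simpa [smul_neg, sub_eq_add_neg] using this
  · show z - (z - (c / ((i:ℝ)+1)) • e) ∈ interior Cp
    rw [sub_sub_cancel]
    exact l_int_smul hC (by positivity) he

lemma l_M_step (hΦ : IsFlow Φ) (hC : IsConeOrder Cp) (hcomp : StronglyCompetitive Φ Cp)
    (h0 : (0:Euc n) ∉ interior Cp) (s : ℝ) {z : Euc n} (hz : z ∈ MminusInfty Φ Cp xlo) :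
    Φ s z ∈ MminusInfty Φ Cp xlo := by
  have hzc : z ∈ closure (Rtil Φ Cp xlo) := l_M_sub hz
  have hsc : Φ s z ∈ closure (Rtil Φ Cp xlo) :=
    map_mem_closure (l_cont hΦ s) hzc (fun x hx => l_Rt_inv hΦ s hx)
  refine ⟨l_seq_above hΦ hC hcomp h0 hsc, ?_⟩
  rintro ⟨v, hvS, hvt, hvll⟩
  have hv0 : v 0 ∈ closure (Rtil Φ Cp xlo) := subset_closure (interior_subset (hvS 0))
  have h1 : Φ s z ∈ RminusInfty Φ Cp xlo := l_key hΦ hC hcomp h0 hv0 (hvll 0)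
  have h2 : z ∈ RminusInfty Φ Cp xlo := by
    have := l_S_inv hΦ (-s) h1
    rwa [l_cancel' hΦ] at this
  exact l_M_not_S hC hz h2

end Aux

theorem stmt13 {n : ℕ} (Φ : ℝ → Euc n → Euc n) (Cp Γ : Set (Euc n))
    (hΦ : IsFlow Φ) (hC : IsConeOrder Cp) (hcomp : StronglyCompetitive Φ Cp)
    (hΓ : Dissipative Φ Γ)
    (xlo : Euc n) (hlo : ∀ g ∈ Γ, coneLe Cp xlo g) :
    Invariant Φ (MminusInfty Φ Cp xlo) ∧ Unordered Cp (MminusInfty Φ Cp xlo) := by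
  by_cases h0 : (0:Euc n) ∈ interior Cp
  · -- degenerate case: the whole space is a single point
    have hall : ∀ v : Euc n, v = 0 := by
      intro v
      obtain ⟨r, hr, hball⟩ := Metric.mem_nhds_iff.1 (mem_interior_iff_mem_nhds.1 h0)
      set δ := r / (2 * (‖v‖ + 1)) with hδdef
      have hδ : 0 < δ := by positivity
      have hnorm : ‖δ • v‖ < r := by
        rw [norm_smul, Real.norm_eq_abs, abs_of_pos hδ, hδdef, div_mul_eq_mul_div,
          div_lt_iff₀ (by positivity)]
        nlinarith [norm_nonneg v]
      have h1 : δ • v ∈ Cp := hball (mem_ball_zero_iff.2 hnorm)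
      have h2 : δ • v ∈ -Cp := by
        rw [Set.mem_neg]
        apply hball
        rw [mem_ball_zero_iff, norm_neg]
        exact hnorm
      have h3 : δ • v ∈ Cp ∩ (-Cp) := ⟨h1, h2⟩
      rw [hC.2.2.2.2] at h3
      have h4 : δ • v = 0 := h3
      exact (smul_eq_zero.1 h4).resolve_left hδ.ne'
    have hsub : ∀ x y : Euc n, x = y := fun x y => (hall x).trans (hall y).symm
    constructor
    · intro t
      ext x
      constructor
      · rintro ⟨w, hw, rfl⟩
        rwa [hsub (Φ t w) w]
      · intro hx
        exact ⟨x, hx, hsub _ _⟩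
    · intro x hx y hy hne
      exact absurd (hsub x y) hne
  · constructor
    · intro t
      ext x
      constructor
      · rintro ⟨w, hw, rfl⟩
        exact l_M_step hΦ hC hcomp h0 t hw
      · intro hx
        exact ⟨Φ (-t) x, l_M_step hΦ hC hcomp h0 (-t) hx, l_cancel hΦ t x⟩
    · intro x hx y hy hne hle
      have hlt : coneLt Cp x y := ⟨hle, fun h => hne h.symm⟩
      have h1 := l_back hΦ hcomp one_pos hlt
      have hx1 := l_M_step hΦ hC hcomp h0 (-1) hx
      have hy1 := l_M_step hΦ hC hcomp h0 (-1) hy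
      have h2 : Φ (-1) y ∈ RminusInfty Φ Cp xlo := l_key hΦ hC hcomp h0 (l_M_sub hx1) h1
      exact l_M_not_S hC hy1 h2
end
end

section
/- (Absorbing Principle for the Birkhoff Center) Assume (H1)-(H2). Let B be an unordered connected component of 𝓑(Φ) and let q ∈ E. If x < q for some x ∈ B, then y ≪ q for all y ∈ B; similarly, if q < x for some x ∈ B, then q ≪ y for all y ∈ B. -/
open Set Metric Filter Topology Pointwise

noncomputable section

section AbsorbAux

variable {n : ℕ}

private lemma flowCont {Φ : ℝ → Euc n → Euc n}
    (hcont : Continuous fun p : ℝ × Euc n => Φ p.1 p.2) (t : ℝ) :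
    Continuous (Φ t) :=
  hcont.comp (continuous_const.prodMk continuous_id)

private lemma zero_not_int {Cp : Set (Euc n)} (hsal : Cp ∩ (-Cp) = {0})
    {v : Euc n} (hv : v ≠ 0) : (0 : Euc n) ∉ interior Cp := by
  intro h0
  rcases Metric.isOpen_iff.mp isOpen_interior 0 h0 with ⟨ε, hε, hball⟩
  have hvn : (0:ℝ) < ‖v‖ := norm_pos_iff.mpr hv
  have hcoef : (0:ℝ) < ε / (2 * ‖v‖) := by positivity
  set w : Euc n := (ε / (2 * ‖v‖)) • v with hw
  have hwn : ‖w‖ = ε / 2 := by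
    rw [hw, norm_smul, Real.norm_eq_abs, abs_of_pos hcoef]
    field_simp
  have hwb : w ∈ Metric.ball (0 : Euc n) ε := by
    rw [mem_ball_zero_iff, hwn]; linarith
  have hwb' : -w ∈ Metric.ball (0 : Euc n) ε := by
    rw [mem_ball_zero_iff, norm_neg, hwn]; linarith
  have hmem : w ∈ ({0} : Set (Euc n)) := by
    rw [← hsal]
    exact ⟨interior_subset (hball hwb), by rw [Set.mem_neg]; exact interior_subset (hball hwb')⟩
  exact smul_ne_zero (ne_of_gt hcoef) hv hmem

private lemma LL_ne {Cp : Set (Euc n)} (h0 : (0:Euc n) ∉ interior Cp)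
    {a b : Euc n} (h : coneLL Cp a b) : b ≠ a := by
  intro e
  rw [e] at h
  simp only [coneLL, sub_self] at h
  exact h0 h

private lemma LL_lt {Cp : Set (Euc n)} (h0 : (0:Euc n) ∉ interior Cp)
    {a b : Euc n} (h : coneLL Cp a b) : coneLt Cp a b :=
  ⟨interior_subset h, LL_ne h0 h⟩

private lemma backstep {Φ : ℝ → Euc n → Euc n} {Cp : Set (Euc n)}
    (hadd : ∀ t s x, Φ t (Φ s x) = Φ (t + s) x)
    (hcomp : StronglyCompetitive Φ Cp)
    {q : Euc n} (hq : q ∈ equilibria Φ)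
    {z : Euc n} {s t : ℝ} (hts : t < s)
    (h : coneLt Cp (Φ s z) q) : coneLL Cp (Φ t z) q := by
  have h2 := (hcomp (s - t) (by linarith) (Φ t z) q).2
  apply h2
  have e1 : Φ (s - t) (Φ t z) = Φ s z := by rw [hadd, sub_add_cancel]
  rw [e1, hq (s - t)]
  exact h

private lemma recur_step {Φ : ℝ → Euc n → Euc n} {Cp : Set (Euc n)}
    (hcont : Continuous fun p : ℝ × Euc n => Φ p.1 p.2)
    (hadd : ∀ t s x, Φ t (Φ s x) = Φ (t + s) x)
    (hcomp : StronglyCompetitive Φ Cp)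
    (h0 : (0:Euc n) ∉ interior Cp)
    {q : Euc n} (hq : q ∈ equilibria Φ)
    {z : Euc n} (hz : z ∈ recurrentSet Φ)
    (h1 : coneLL Cp (Φ (-1) z) q) : coneLL Cp (Φ 1 z) q := by
  have h2 : coneLL Cp (Φ (-2) z) q :=
    backstep hadd hcomp hq (by norm_num : (-2:ℝ) < -1) (LL_lt h0 h1)
  have hUo : IsOpen ((fun w => q - Φ (-2) w) ⁻¹' interior Cp) :=
    isOpen_interior.preimage (continuous_const.sub (flowCont hcont (-2)))
  have hcl : z ∈ closure ((fun τ => Φ τ z) '' Ici (4:ℝ)) := by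
    have hz' : z ∈ ⋂ t ∈ Ici (0:ℝ), closure ((fun τ => Φ τ z) '' Ici t) := hz
    exact mem_iInter₂.mp hz' 4 (by norm_num)
  rcases _root_.mem_closure_iff.mp hcl _ hUo h2 with ⟨_, hwU, ⟨τ, hτ, rfl⟩⟩
  have hττ : (4:ℝ) ≤ τ := hτ
  have h3 : coneLL Cp (Φ (τ - 2) z) q := by
    have hx : q - Φ (-2) (Φ τ z) ∈ interior Cp := hwU
    rwa [hadd, (by ring : (-2) + τ = τ - 2)] at hx
  exact backstep hadd hcomp hq (by linarith : (1:ℝ) < τ - 2) (LL_lt h0 h3)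

private lemma crux {Φ : ℝ → Euc n → Euc n} {Cp : Set (Euc n)}
    (hcont : Continuous fun p : ℝ × Euc n => Φ p.1 p.2)
    (hzero : ∀ x, Φ 0 x = x)
    (hadd : ∀ t s x, Φ t (Φ s x) = Φ (t + s) x)
    (hCcl : IsClosed Cp)
    (hcomp : StronglyCompetitive Φ Cp)
    (h0 : (0:Euc n) ∉ interior Cp)
    {q : Euc n} (hq : q ∈ equilibria Φ)
    {z : Euc n} (hz : z ∈ birkhoffCenter Φ)
    (hzq : coneLt Cp z q) : coneLL Cp z q := by
  have h1 : coneLL Cp (Φ (-1) z) q := by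
    refine backstep hadd hcomp hq (by norm_num : (-1:ℝ) < 0) ?_
    rw [hzero]; exact hzq
  have hUo : IsOpen ((fun w => q - Φ (-1) w) ⁻¹' interior Cp) :=
    isOpen_interior.preimage (continuous_const.sub (flowCont hcont (-1)))
  have hWc : IsClosed ((fun w => q - Φ 1 w) ⁻¹' Cp) :=
    hCcl.preimage (continuous_const.sub (flowCont hcont 1))
  have hRU : recurrentSet Φ ∩ ((fun w => q - Φ (-1) w) ⁻¹' interior Cp) ⊆
      ((fun w => q - Φ 1 w) ⁻¹' Cp) := by
    rintro r ⟨hr, hrU⟩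
    show q - Φ 1 r ∈ Cp
    exact interior_subset (recur_step hcont hadd hcomp h0 hq hr hrU)
  have hzRU : z ∈ closure (recurrentSet Φ ∩ ((fun w => q - Φ (-1) w) ⁻¹' interior Cp)) := by
    rw [_root_.mem_closure_iff]
    intro o ho hzo
    rcases _root_.mem_closure_iff.mp hz (o ∩ _) (ho.inter hUo) ⟨hzo, h1⟩ with ⟨r, ⟨hro, hrU⟩, hrR⟩
    exact ⟨r, hro, hrR, hrU⟩
  have hzW : q - Φ 1 z ∈ Cp := closure_minimal hRU hWc hzRU
  have hne : q ≠ Φ 1 z := by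
    intro e
    apply hzq.2
    have hzz : Φ (-1) (Φ 1 z) = z := by rw [hadd]; norm_num [hzero]
    rw [← hzz, ← e, hq (-1)]
  have h3 : coneLL Cp (Φ 0 z) q :=
    backstep hadd hcomp hq (by norm_num : (0:ℝ) < 1) ⟨hzW, hne⟩
  rwa [hzero] at h3

private lemma absorb {Φ : ℝ → Euc n → Euc n} {Cp : Set (Euc n)}
    (hcont : Continuous fun p : ℝ × Euc n => Φ p.1 p.2)
    (hzero : ∀ x, Φ 0 x = x)
    (hadd : ∀ t s x, Φ t (Φ s x) = Φ (t + s) x)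
    (hCcl : IsClosed Cp) (hsal : Cp ∩ (-Cp) = {0})
    (hcomp : StronglyCompetitive Φ Cp)
    {B : Set (Euc n)} (hBsub : B ⊆ birkhoffCenter Φ) (hBconn : IsPreconnected B)
    (hBinv : ∀ t, ∀ y ∈ B, Φ t y ∈ B) (hBu : Unordered Cp B)
    {q : Euc n} (hq : q ∈ equilibria Φ)
    {x : Euc n} (hx : x ∈ B) (hxq : coneLt Cp x q) :
    ∀ y ∈ B, coneLL Cp y q := by
  have h0 : (0 : Euc n) ∉ interior Cp := zero_not_int hsal (sub_ne_zero_of_ne hxq.2)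
  have hx1B : Φ (-1) x ∈ B := hBinv (-1) x hx
  have hx1q : coneLL Cp (Φ (-1) x) q := by
    refine backstep hadd hcomp hq (by norm_num : (-1:ℝ) < 0) ?_
    rw [hzero]; exact hxq
  have hqB : q ∉ B := by
    intro hqB
    exact hBu _ hx1B q hqB (LL_ne h0 hx1q).symm (interior_subset hx1q)
  intro y hy
  by_contra hyn
  have hyv : q - y ∉ Cp := by
    intro hle
    refine hyn (crux hcont hzero hadd hCcl hcomp h0 hq (hBsub hy) ⟨hle, ?_⟩)
    intro e; exact hqB (by rw [e]; exact hy)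
  obtain ⟨w, hwB, hwu, hwv⟩ :=
    hBconn ((fun z => q - z) ⁻¹' interior Cp) (((fun z => q - z) ⁻¹' Cp)ᶜ)
      (isOpen_interior.preimage (continuous_const.sub continuous_id))
      ((hCcl.preimage (continuous_const.sub continuous_id)).isOpen_compl)
      (fun z hz => by
        by_cases h : q - z ∈ Cp
        · exact Or.inl
            (crux hcont hzero hadd hCcl hcomp h0 hq (hBsub hz)
              ⟨h, fun e => hqB (by rw [e]; exact hz)⟩)
        · exact Or.inr h)
      ⟨Φ (-1) x, hx1B, hx1q⟩ ⟨y, hy, hyv⟩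
  exact hwv (show q - w ∈ Cp from interior_subset hwu)

private lemma recurrent_inv {Φ : ℝ → Euc n → Euc n}
    (hcont : Continuous fun p : ℝ × Euc n => Φ p.1 p.2)
    (hadd : ∀ t s x, Φ t (Φ s x) = Φ (t + s) x)
    (s : ℝ) {r : Euc n} (hr : r ∈ recurrentSet Φ) : Φ s r ∈ recurrentSet Φ := by
  have hr' : ∀ t ∈ Ici (0:ℝ), r ∈ closure ((fun τ => Φ τ r) '' Ici t) := by
    have h : r ∈ ⋂ t ∈ Ici (0:ℝ), closure ((fun τ => Φ τ r) '' Ici t) := hr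
    exact mem_iInter₂.mp h
  have : Φ s r ∈ ⋂ t ∈ Ici (0:ℝ), closure ((fun τ => Φ τ (Φ s r)) '' Ici t) := by
    refine mem_iInter₂.mpr fun t ht => ?_
    have himg : (fun τ => Φ τ (Φ s r)) '' Ici t = Φ s '' ((fun τ => Φ τ r) '' Ici t) := by
      rw [Set.image_image]
      apply Set.image_congr
      intro τ _
      rw [hadd τ s r, hadd s τ r, add_comm]
    rw [himg]
    exact image_closure_subset_closure_image (flowCont hcont s)
      (Set.mem_image_of_mem _ (hr' t ht))
  exact this

private lemma birkhoff_inv {Φ : ℝ → Euc n → Euc n}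
    (hcont : Continuous fun p : ℝ × Euc n => Φ p.1 p.2)
    (hadd : ∀ t s x, Φ t (Φ s x) = Φ (t + s) x)
    (s : ℝ) {z : Euc n} (hz : z ∈ birkhoffCenter Φ) : Φ s z ∈ birkhoffCenter Φ := by
  have h1 : Φ s z ∈ closure (Φ s '' recurrentSet Φ) :=
    image_closure_subset_closure_image (flowCont hcont s) (Set.mem_image_of_mem _ hz)
  refine closure_mono ?_ h1
  rintro w ⟨r, hr, rfl⟩
  exact recurrent_inv hcont hadd s hr

private lemma comp_inv {Φ : ℝ → Euc n → Euc n}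
    (hcont : Continuous fun p : ℝ × Euc n => Φ p.1 p.2)
    (hzero : ∀ x, Φ 0 x = x)
    (hadd : ∀ t s x, Φ t (Φ s x) = Φ (t + s) x)
    {x₀ : Euc n} (hx₀ : x₀ ∈ birkhoffCenter Φ)
    (t : ℝ) {y : Euc n} (hy : y ∈ connectedComponentIn (birkhoffCenter Φ) x₀) :
    Φ t y ∈ connectedComponentIn (birkhoffCenter Φ) x₀ := by
  set B' := connectedComponentIn (birkhoffCenter Φ) x₀ with hB'
  have hMconn : IsPreconnected ((fun p : ℝ × Euc n => Φ p.1 p.2) '' ((uIcc (0:ℝ) t) ×ˢ B')) :=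
    (isPreconnected_uIcc.prod isPreconnected_connectedComponentIn).image _ hcont.continuousOn
  have hMsub : (fun p : ℝ × Euc n => Φ p.1 p.2) '' ((uIcc (0:ℝ) t) ×ˢ B') ⊆ birkhoffCenter Φ := by
    rintro _ ⟨⟨s, w⟩, ⟨hs, hw⟩, rfl⟩
    exact birkhoff_inv hcont hadd s (connectedComponentIn_subset _ _ hw)
  have hx₀M : x₀ ∈ (fun p : ℝ × Euc n => Φ p.1 p.2) '' ((uIcc (0:ℝ) t) ×ˢ B') :=
    ⟨(0, x₀), ⟨left_mem_uIcc, mem_connectedComponentIn hx₀⟩, hzero x₀⟩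
  have hMB : (fun p : ℝ × Euc n => Φ p.1 p.2) '' ((uIcc (0:ℝ) t) ×ˢ B') ⊆ B' :=
    hMconn.subset_connectedComponentIn hx₀M hMsub
  exact hMB ⟨(t, y), ⟨right_mem_uIcc, hy⟩, rfl⟩

private lemma interiorNeg (s : Set (Euc n)) : interior (-s) = -interior s := by
  have h := (Homeomorph.neg (Euc n)).preimage_interior s
  simpa using h.symm

end AbsorbAux

theorem stmt15 {n : ℕ} (Φ : ℝ → Euc n → Euc n) (Cp Γ : Set (Euc n))
    (hΦ : IsFlow Φ) (hC : IsConeOrder Cp) (hcomp : StronglyCompetitive Φ Cp)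
    (hΓ : Dissipative Φ Γ)
    (B : Set (Euc n)) (x₀ : Euc n) (hx₀ : x₀ ∈ birkhoffCenter Φ)
    (hB : B = connectedComponentIn (birkhoffCenter Φ) x₀)
    (hBu : Unordered Cp B) (q : Euc n) (hq : q ∈ equilibria Φ) :
    ((∃ x ∈ B, coneLt Cp x q) → ∀ y ∈ B, coneLL Cp y q) ∧
    ((∃ x ∈ B, coneLt Cp q x) → ∀ y ∈ B, coneLL Cp q y) :=  by
  obtain ⟨hcont, hzero, hadd⟩ := hΦ
  have hBsub : B ⊆ birkhoffCenter Φ := by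
    rw [hB]; exact connectedComponentIn_subset _ _
  have hBconn : IsPreconnected B := by
    rw [hB]; exact isPreconnected_connectedComponentIn
  have hBinv : ∀ t, ∀ y ∈ B, Φ t y ∈ B := by
    intro t y hy
    rw [hB] at hy ⊢
    exact comp_inv hcont hzero hadd hx₀ t hy
  constructor
  · rintro ⟨x, hx, hxq⟩
    exact absorb hcont hzero hadd hC.1 hC.2.2.2.2 hcomp hBsub hBconn hBinv hBu hq hx hxq
  · rintro ⟨x, hx, hxq⟩ y hy
    have hCcl : IsClosed (-Cp) := hC.1.neg
    have hsal : (-Cp) ∩ (-(-Cp)) = {0} := by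
      rw [neg_neg, Set.inter_comm]; exact hC.2.2.2.2
    have hcomp' : StronglyCompetitive Φ (-Cp) := by
      intro t ht a b
      obtain ⟨h1, h2⟩ := hcomp t ht b a
      constructor
      · intro h
        simp only [coneLe, Set.mem_neg, neg_sub] at h ⊢
        exact h1 h
      · intro h
        have h' : coneLt Cp (Φ t b) (Φ t a) := by
          refine ⟨?_, h.2.symm⟩
          have := h.1
          rwa [Set.mem_neg, neg_sub] at this
        have hll : coneLL Cp b a := h2 h'
        show b - a ∈ interior (-Cp)
        rw [interiorNeg, Set.mem_neg, neg_sub]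
        exact hll
    have hBu' : Unordered (-Cp) B := by
      intro a ha b hb hne hle
      have h' : a - b ∈ Cp := by
        simp only [coneLe, Set.mem_neg, neg_sub] at hle
        exact hle
      exact hBu b hb a ha hne.symm h'
    have hxq' : coneLt (-Cp) x q := by
      refine ⟨?_, hxq.2.symm⟩
      rw [Set.mem_neg, neg_sub]
      exact hxq.1
    have h := absorb hcont hzero hadd hCcl hsal hcomp' hBsub hBconn hBinv hBu' hq hx hxq' y hy
    have h' : q - y ∈ interior (-Cp) := h
    rw [interiorNeg, Set.mem_neg, neg_sub] at h'
    exact h'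
end
end

section
/- Let Φ be a continuous flow on ℝⁿ, let z be a recurrent point and let θ > 0. Then for any τ > 0 and ε > 0, the recurrent-time set N(z,θ) = {t > 0 : |Φ_t(z) − z| < θ} meets 𝒯(τ,ε) = {nτ + t : n ∈ ℕ, |t| < ε}; that is, there exist n ∈ ℕ and t ∈ ℝ with |t| < ε such that nτ + t > 0 and |Φ_{nτ+t}(z) − z| < θ. -/
open Set Metric Filter Topology Pointwise

noncomputable section

set_option maxHeartbeats 1000000 in
theorem stmt18 {n : ℕ} (Φ : ℝ → Euc n → Euc n) (hΦ : IsFlow Φ)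
    (z : Euc n) (hz : z ∈ recurrentSet Φ) (θ : ℝ) (hθ : 0 < θ)
    (τ : ℝ) (hτ : 0 < τ) (ε : ℝ) (hε : 0 < ε) :
    ∃ m : ℕ, ∃ t : ℝ, |t| < ε ∧ 0 < (m : ℝ) * τ + t ∧
      dist (Φ ((m : ℝ) * τ + t) z) z < θ := by
  classical
  have hcont : ∀ t : ℝ, Continuous (Φ t) := fun t => hΦ.1.comp (Continuous.prodMk_right t)
  -- recurrence: arbitrarily large near-return times
  have hrec : ∀ δ : ℝ, 0 < δ → ∀ T : ℝ, ∃ s : ℝ, T ≤ s ∧ dist (Φ s z) z < δ := by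
    intro δ hδ T
    have hmem : z ∈ closure ((fun τ => Φ τ z) '' Ici (max T 0)) := by
      have h := hz
      simp only [recurrentSet, omegaSet, mem_setOf_eq, mem_iInter] at h
      exact h (max T 0) (le_max_right T 0)
    rcases Metric.mem_closure_iff.1 hmem δ hδ with ⟨y, hy, hdy⟩
    rcases hy with ⟨s, hs, rfl⟩
    exact ⟨s, le_trans (le_max_left T 0) hs, by rwa [dist_comm] at hdy⟩
  -- a sequence of near-return times with all block sums near-returning
  have hseq : ∀ η : ℝ, 0 < η → ∀ m : ℕ, ∃ s : ℕ → ℝ,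
      (∀ i, i < m → 1 ≤ s i) ∧
      (∀ j k : ℕ, j < k → k ≤ m →
        dist (Φ (∑ i ∈ Finset.Ico j k, s i) z) z < ((k - j : ℕ) : ℝ) * η) := by
    intro η hη m
    induction m with
    | zero =>
        exact ⟨fun _ => 0, fun i hi => absurd hi (Nat.not_lt_zero i),
          fun j k hjk hk => absurd (lt_of_lt_of_le hjk hk) (Nat.not_lt_zero j)⟩
    | succ m ih =>
        obtain ⟨s, hs1, hs2⟩ := ih
        set S : Set (Euc n) := ⋂ j ∈ Finset.range m,
          (Φ (∑ i ∈ Finset.Ico j m, s i)) ⁻¹'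
            (Metric.ball (Φ (∑ i ∈ Finset.Ico j m, s i) z) η) with hS
        have hSopen : IsOpen S :=
          isOpen_biInter_finset (fun j _ => Metric.isOpen_ball.preimage (hcont _))
        have hzS : z ∈ S := by
          simp only [hS, mem_iInter, mem_preimage, Metric.mem_ball]
          intro j _
          simpa using hη
        obtain ⟨δ, hδ, hδball⟩ := Metric.mem_nhds_iff.1 (hSopen.mem_nhds hzS)
        obtain ⟨sm, hsm1, hsmd⟩ := hrec (min δ η) (lt_min hδ hη) 1
        refine ⟨Function.update s m sm, ?_, ?_⟩
        · intro i hi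
          rcases Nat.lt_succ_iff_lt_or_eq.1 hi with hi | rfl
          · rw [Function.update_of_ne (Nat.ne_of_lt hi)]
            exact hs1 i hi
          · rw [Function.update_self]; exact hsm1
        · intro j k hjk hk
          have hupd : ∀ a b : ℕ, b ≤ m →
              (∑ i ∈ Finset.Ico a b, Function.update s m sm i)
                = ∑ i ∈ Finset.Ico a b, s i := by
            intro a b hb
            apply Finset.sum_congr rfl
            intro i hi
            have : i < m := lt_of_lt_of_le (Finset.mem_Ico.1 hi).2 hb
            exact Function.update_of_ne (Nat.ne_of_lt this) _ _
          rcases eq_or_lt_of_le hk with rfl | hk'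
          · -- k = m + 1
            have hsum : (∑ i ∈ Finset.Ico j (m + 1), Function.update s m sm i)
                = (∑ i ∈ Finset.Ico j m, s i) + sm := by
              rw [Finset.sum_Ico_succ_top (Nat.lt_succ_iff.1 hjk),
                Function.update_self, hupd j m le_rfl]
            rw [hsum]
            have hflow : Φ ((∑ i ∈ Finset.Ico j m, s i) + sm) z
                = Φ (∑ i ∈ Finset.Ico j m, s i) (Φ sm z) := (hΦ.2.2 _ _ _).symm
            rw [hflow]
            have hball : Φ sm z ∈ Metric.ball z δ :=
              Metric.mem_ball.2 (lt_of_lt_of_le hsmd (min_le_left _ _))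
            have hΦsmS : Φ sm z ∈ S := hδball hball
            rcases (Nat.lt_succ_iff.1 hjk).lt_or_eq with hjm | rfl
            · -- j < m
              have h1 : dist (Φ (∑ i ∈ Finset.Ico j m, s i) (Φ sm z))
                  (Φ (∑ i ∈ Finset.Ico j m, s i) z) < η := by
                have := mem_iInter₂.1 hΦsmS j (Finset.mem_range.2 hjm)
                exact Metric.mem_ball.1 this
              have h2 : dist (Φ (∑ i ∈ Finset.Ico j m, s i) z) z
                  < ((m - j : ℕ) : ℝ) * η := hs2 j m hjm le_rfl
              have htri := dist_triangle (Φ (∑ i ∈ Finset.Ico j m, s i) (Φ sm z))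
                (Φ (∑ i ∈ Finset.Ico j m, s i) z) z
              have hcast : ((m + 1 - j : ℕ) : ℝ) = ((m - j : ℕ) : ℝ) + 1 := by
                have : m + 1 - j = (m - j) + 1 := by omega
                rw [this]; push_cast; ring
              rw [hcast]
              calc dist (Φ (∑ i ∈ Finset.Ico j m, s i) (Φ sm z)) z
                  ≤ _ + _ := htri
                _ < η + ((m - j : ℕ) : ℝ) * η := add_lt_add h1 h2
                _ = (((m - j : ℕ) : ℝ) + 1) * η := by ring
            · -- j = m : block sum is just sm
              have hIco : Finset.Ico j j = ∅ := Finset.Ico_self j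
              rw [hIco, Finset.sum_empty]
              have hd : dist (Φ sm z) z < η := lt_of_lt_of_le hsmd (min_le_right _ _)
              have hc : ((j + 1 - j : ℕ) : ℝ) = 1 := by
                have : j + 1 - j = 1 := by omega
                rw [this]; norm_num
              rw [hc, one_mul, hΦ.2.1]
              exact hd
          · have hkm : k ≤ m := Nat.lt_succ_iff.1 hk'
            rw [hupd j k hkm]
            exact hs2 j k hjk hkm
  -- set up parameters
  set ε' : ℝ := min ε τ with hε'def
  have hε' : 0 < ε' := lt_min hε hτ
  have hε'τ : ε' ≤ τ := min_le_right _ _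
  have hε'ε : ε' ≤ ε := min_le_left _ _
  set K : ℕ := ⌈τ / ε'⌉₊ with hKdef
  have hK : 0 < K := Nat.ceil_pos.2 (div_pos hτ hε')
  have hKR : (0 : ℝ) < (K : ℝ) := Nat.cast_pos.2 hK
  have hτK : τ / (K : ℝ) ≤ ε' := by
    rw [div_le_iff₀ hKR]
    have h1 : τ / ε' ≤ (K : ℝ) := Nat.le_ceil _
    calc τ = (τ / ε') * ε' := by field_simp
      _ ≤ (K : ℝ) * ε' := by
          apply mul_le_mul_of_nonneg_right h1 (le_of_lt hε')
      _ = ε' * K := by ring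
  set η : ℝ := θ / ((K : ℝ) + 1) with hηdef
  have hη : 0 < η := div_pos hθ (by positivity)
  obtain ⟨s, hs1, hs2⟩ := hseq η hη K
  set u : ℕ → ℝ := fun k => ∑ i ∈ Finset.range k, s i with hudef
  -- pigeonhole on fractional parts
  have hf : ∀ k : ℕ, ⌊Int.fract (u k / τ) * (K : ℝ)⌋₊ < K := by
    intro k
    have h0 : 0 ≤ Int.fract (u k / τ) * (K : ℝ) :=
      mul_nonneg (Int.fract_nonneg _) (le_of_lt hKR)
    rw [Nat.floor_lt h0]
    have := Int.fract_lt_one (u k / τ)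
    calc Int.fract (u k / τ) * (K : ℝ) < 1 * K := by
          apply mul_lt_mul_of_pos_right this hKR
      _ = K := one_mul _
  have hcard : Fintype.card (Fin K) < Fintype.card (Fin (K + 1)) := by simp
  obtain ⟨a, b, hab, hfab⟩ := Fintype.exists_ne_map_eq_of_card_lt
    (fun k : Fin (K + 1) => (⟨⌊Int.fract (u k / τ) * (K : ℝ)⌋₊, hf k⟩ : Fin K)) hcard
  have hfab' : ⌊Int.fract (u a / τ) * (K : ℝ)⌋₊ = ⌊Int.fract (u b / τ) * (K : ℝ)⌋₊ :=
    congrArg Fin.val hfab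
  -- wlog a < b : produce j < k
  have key : ∀ j k : Fin (K + 1), (j : ℕ) < (k : ℕ) →
      ⌊Int.fract (u j / τ) * (K : ℝ)⌋₊ = ⌊Int.fract (u k / τ) * (K : ℝ)⌋₊ →
      ∃ m : ℕ, ∃ t : ℝ, |t| < ε ∧ 0 < (m : ℝ) * τ + t ∧
        dist (Φ ((m : ℝ) * τ + t) z) z < θ := by
    intro j k hjk hfloor
    have hkK : (k : ℕ) ≤ K := Nat.lt_succ_iff.1 k.isLt
    -- the block sum
    have hD : u k - u j = ∑ i ∈ Finset.Ico (j : ℕ) (k : ℕ), s i := by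
      rw [hudef]
      exact (Finset.sum_Ico_eq_sub s (le_of_lt hjk)).symm
    set D : ℝ := u k - u j with hDdef
    -- D is a θ-return time
    have hdist : dist (Φ D z) z < θ := by
      have h := hs2 (j : ℕ) (k : ℕ) hjk hkK
      rw [← hD] at h
      refine lt_of_lt_of_le h ?_
      have hle : ((k : ℕ) - (j : ℕ) : ℕ) ≤ K := by omega
      calc (((k : ℕ) - (j : ℕ) : ℕ) : ℝ) * η ≤ (K : ℝ) * η := by
            apply mul_le_mul_of_nonneg_right _ (le_of_lt hη)
            exact_mod_cast hle
        _ ≤ θ := by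
            have h1 : (K : ℝ) / ((K : ℝ) + 1) ≤ 1 := by
              rw [div_le_one (by positivity)]; linarith
            calc (K : ℝ) * (θ / ((K : ℝ) + 1)) = θ * ((K : ℝ) / ((K : ℝ) + 1)) := by
                  ring
              _ ≤ θ * 1 := mul_le_mul_of_nonneg_left h1 (le_of_lt hθ)
              _ = θ := mul_one θ
    -- D ≥ 1
    have hD1 : (1 : ℝ) ≤ D := by
      rw [hD]
      have : ∀ i ∈ Finset.Ico (j : ℕ) (k : ℕ), (1 : ℝ) ≤ s i := by
        intro i hi
        exact hs1 i (lt_of_lt_of_le (Finset.mem_Ico.1 hi).2 hkK)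
      calc (1 : ℝ) ≤ (((k : ℕ) - (j : ℕ) : ℕ) : ℝ) * (1 : ℝ) := by
            have h1 : 1 ≤ (k : ℕ) - (j : ℕ) := by omega
            have h2 : (1 : ℝ) ≤ (((k : ℕ) - (j : ℕ) : ℕ) : ℝ) := by exact_mod_cast h1
            rw [mul_one]
            exact h2
        _ = ∑ _i ∈ Finset.Ico (j : ℕ) (k : ℕ), (1 : ℝ) := by
            rw [Finset.sum_const, Nat.card_Ico]; ring
        _ ≤ ∑ i ∈ Finset.Ico (j : ℕ) (k : ℕ), s i := Finset.sum_le_sum this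
    -- fractional part estimate
    set x : ℝ := Int.fract (u j / τ) with hx
    set y : ℝ := Int.fract (u k / τ) with hy
    have hxy : |y - x| < 1 / (K : ℝ) := by
      have hx0 : 0 ≤ x * (K : ℝ) := mul_nonneg (Int.fract_nonneg _) (le_of_lt hKR)
      have hy0 : 0 ≤ y * (K : ℝ) := mul_nonneg (Int.fract_nonneg _) (le_of_lt hKR)
      have h1 : (⌊x * (K : ℝ)⌋₊ : ℝ) ≤ x * K := Nat.floor_le hx0
      have h2 : x * K < ⌊x * (K : ℝ)⌋₊ + 1 := Nat.lt_floor_add_one _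
      have h3 : (⌊y * (K : ℝ)⌋₊ : ℝ) ≤ y * K := Nat.floor_le hy0
      have h4 : y * K < ⌊y * (K : ℝ)⌋₊ + 1 := Nat.lt_floor_add_one _
      have heq : (⌊x * (K : ℝ)⌋₊ : ℝ) = (⌊y * (K : ℝ)⌋₊ : ℝ) := by
        exact_mod_cast hfloor
      have h5 : |y * (K : ℝ) - x * (K : ℝ)| < 1 := by
        rw [abs_lt]
        constructor <;> nlinarith
      have h6 : |y * (K : ℝ) - x * (K : ℝ)| = |y - x| * (K : ℝ) := by
        rw [show y * (K : ℝ) - x * (K : ℝ) = (y - x) * (K : ℝ) by ring, abs_mul,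
          abs_of_pos hKR]
      rw [lt_div_iff₀ hKR]
      rw [h6] at h5
      linarith
    set t : ℝ := τ * (y - x) with ht
    have htε : |t| < ε := by
      have : |t| = τ * |y - x| := by
        rw [ht, abs_mul, abs_of_pos hτ]
      rw [this]
      calc τ * |y - x| < τ * (1 / K) := by
            apply mul_lt_mul_of_pos_left hxy hτ
        _ = τ / K := by ring
        _ ≤ ε' := hτK
        _ ≤ ε := hε'ε
    -- integer part
    set mZ : ℤ := ⌊u k / τ⌋ - ⌊u j / τ⌋ with hmZ
    have hid : (mZ : ℝ) * τ + t = D := by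
      have huk : u k = τ * ((⌊u k / τ⌋ : ℝ) + y) := by
        rw [hy, Int.floor_add_fract]
        field_simp
      have huj : u j = τ * ((⌊u j / τ⌋ : ℝ) + x) := by
        rw [hx, Int.floor_add_fract]
        field_simp
      rw [hDdef, huk, huj, hmZ, ht]
      push_cast
      ring
    have hmZ0 : 0 ≤ mZ := by
      by_contra h
      push_neg at h
      have hm1 : mZ ≤ -1 := by omega
      have : (mZ : ℝ) ≤ -1 := by exact_mod_cast hm1
      have htτ : t < τ := by
        have := abs_lt.1 htε
        -- |t| < ε but we need t < τ; use |t| < τ/K ≤ ε' ≤ τ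
        have h2 : |t| < τ := by
          have h3 : |t| = τ * |y - x| := by rw [ht, abs_mul, abs_of_pos hτ]
          rw [h3]
          calc τ * |y - x| < τ * (1 / K) := mul_lt_mul_of_pos_left hxy hτ
            _ = τ / K := by ring
            _ ≤ ε' := hτK
            _ ≤ τ := hε'τ
        exact lt_of_le_of_lt (le_abs_self t) h2
      nlinarith
    refine ⟨mZ.toNat, t, htε, ?_, ?_⟩
    · have : ((mZ.toNat : ℤ) : ℝ) = (mZ : ℝ) := by
        rw [Int.toNat_of_nonneg hmZ0]
      have h' : ((mZ.toNat : ℕ) : ℝ) * τ + t = D := by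
        rw [show ((mZ.toNat : ℕ) : ℝ) = (mZ : ℝ) by exact_mod_cast this, hid]
      rw [h']
      linarith
    · have h' : ((mZ.toNat : ℕ) : ℝ) * τ + t = D := by
        have : ((mZ.toNat : ℕ) : ℝ) = (mZ : ℝ) := by
          rw [← Int.cast_natCast, Int.toNat_of_nonneg hmZ0]
        rw [this, hid]
      rw [h']
      exact hdist
  have hvne : (a : ℕ) ≠ (b : ℕ) := fun h => hab (Fin.val_injective h)
  rcases hvne.lt_or_gt with h | h
  · exact key a b h hfab'
  · exact key b a h hfab'.symm
end
end

section
/- Let Φ be a continuous flow on ℝⁿ, let z be a recurrent point and let θ > 0. Then there exists a sequence (p_i)_{i≥1} of positive reals such that every finite sum of distinct terms lies in the recurrent-time set N(z,θ): for every nonempty finite set F ⊂ ℕ, the time s = Σ_{i∈F} p_i satisfies |Φ_s(z) − z| < θ. -/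
open Set Metric Filter Topology Pointwise

noncomputable section

section IPAux

variable {n : ℕ} (Φ : ℝ → Euc n → Euc n) (z : Euc n) (θ : ℝ)

/-- Invariant: the first `k` terms of `q` are positive and every nonempty partial
sum over a subset of `range k` returns within `θ * (1 - (1/2)^k)` of `z`. -/
def IPInv (k : ℕ) (q : ℕ → ℝ) : Prop :=
  (∀ i < k, 0 < q i) ∧
  ∀ F : Finset ℕ, F.Nonempty → F ⊆ Finset.range k →
    dist (Φ (∑ i ∈ F, q i) z) z < θ * (1 - (1/2 : ℝ) ^ k)

lemma ipinv_congr {k : ℕ} {q q' : ℕ → ℝ} (h : ∀ i < k, q i = q' i)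
    (hq : IPInv Φ z θ k q) : IPInv Φ z θ k q' := by
  refine ⟨fun i hi => h i hi ▸ hq.1 i hi, fun F hF hFk => ?_⟩
  have hs : ∑ i ∈ F, q' i = ∑ i ∈ F, q i :=
    Finset.sum_congr rfl fun i hi => (h i (Finset.mem_range.mp (hFk hi))).symm
  rw [hs]; exact hq.2 F hF hFk

lemma ip_step (hΦ : IsFlow Φ) (hz : z ∈ recurrentSet Φ) (hθ : 0 < θ)
    (k : ℕ) (q : ℕ → ℝ) :
    ∃ c : ℝ, 0 < c ∧
      (IPInv Φ z θ k q → IPInv Φ z θ (k + 1) (Function.update q k c)) := by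
  by_cases hInv : IPInv Φ z θ k q
  swap
  · exact ⟨1, one_pos, fun h => absurd h hInv⟩
  set ε := θ * (1/2 : ℝ) ^ (k + 1) with hεdef
  have hε0 : 0 < ε := by positivity
  have hcont : ∀ s : ℝ, Continuous (fun x : Euc n => Φ s x) := fun s =>
    hΦ.1.comp (continuous_const.prodMk continuous_id)
  have hδex : ∀ F : Finset ℕ, ∃ δ > 0, ∀ x : Euc n, dist x z < δ →
      dist (Φ (∑ i ∈ F, q i) x) (Φ (∑ i ∈ F, q i) z) < ε := by
    intro F
    have hc := (hcont (∑ i ∈ F, q i)).continuousAt (x := z)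
    rw [Metric.continuousAt_iff] at hc
    obtain ⟨δ, hδ0, hδ⟩ := hc ε hε0
    exact ⟨δ, hδ0, fun x hx => hδ hx⟩
  choose δf hδf0 hδf using hδex
  have hne : (∅ : Finset ℕ) ∈ (Finset.range k).powerset := by simp
  set δ : ℝ := min ε ((Finset.range k).powerset.inf' ⟨∅, hne⟩ δf) with hδdef
  have hδ0 : 0 < δ :=
    lt_min hε0 ((Finset.lt_inf'_iff _).mpr fun F _ => hδf0 F)
  have hδle : ∀ F : Finset ℕ, F ⊆ Finset.range k → δ ≤ δf F := fun F hFk =>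
    le_trans (min_le_right _ _) (Finset.inf'_le δf (Finset.mem_powerset.mpr hFk))
  -- recurrence: find τ ≥ 1 with dist (Φ τ z) z < δ
  have hzcl : z ∈ closure ((fun τ => Φ τ z) '' Ici (1 : ℝ)) := by
    have hz' := hz
    simp only [recurrentSet, omegaSet, mem_setOf_eq, Set.mem_iInter] at hz'
    exact hz' 1 (by norm_num : (1:ℝ) ∈ Ici (0:ℝ))
  obtain ⟨y, hy, hdy⟩ := Metric.mem_closure_iff.mp hzcl δ hδ0
  obtain ⟨τ, hτ1, rfl⟩ := hy
  have hτz : dist (Φ τ z) z < δ := by rwa [dist_comm] at hdy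
  have hτ0 : (0 : ℝ) < τ := lt_of_lt_of_le one_pos hτ1
  refine ⟨τ, hτ0, fun _ => ?_⟩
  set q' := Function.update q k τ with hq'def
  have hq'k : q' k = τ := Function.update_self k τ q
  have hq'lt : ∀ i < k, q' i = q i := fun i hi =>
    Function.update_of_ne (Nat.ne_of_lt hi) τ q
  have hpowk : ((1:ℝ)/2) ^ (k+1) = (1/2 : ℝ) ^ k * (1/2) := pow_succ _ _
  have hpowpos : (0:ℝ) < (1/2 : ℝ) ^ k := by positivity
  have hpowle1 : ((1:ℝ)/2) ^ k ≤ 1 := pow_le_one₀ (by norm_num) (by norm_num)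
  constructor
  · intro i hi
    rcases Nat.lt_succ_iff_lt_or_eq.mp hi with hi' | rfl
    · rw [hq'lt i hi']; exact hInv.1 i hi'
    · rw [hq'k]; exact hτ0
  · intro F hF hFk1
    by_cases hkF : k ∈ F
    · set F' := F.erase k with hF'def
      have hF'sub : F' ⊆ Finset.range k := by
        intro i hi
        have hik : i ≠ k := Finset.ne_of_mem_erase hi
        have := Finset.mem_range.mp (hFk1 (Finset.mem_of_mem_erase hi))
        exact Finset.mem_range.mpr (lt_of_le_of_ne (Nat.lt_succ_iff.mp this) hik)
      have hsum : ∑ i ∈ F, q' i = (∑ i ∈ F', q i) + τ := by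
        rw [← Finset.add_sum_erase F q' hkF, hq'k, add_comm]
        congr 1
        exact Finset.sum_congr rfl fun i hi =>
          hq'lt i (Finset.mem_range.mp (hF'sub hi))
      set s' := ∑ i ∈ F', q i with hs'def
      have hflow : Φ (s' + τ) z = Φ s' (Φ τ z) := (hΦ.2.2 s' τ z).symm
      rw [hsum, hflow]
      have h1 : dist (Φ s' (Φ τ z)) (Φ s' z) < ε :=
        hδf F' (Φ τ z) (lt_of_lt_of_le hτz (hδle F' hF'sub))
      have h2 : dist (Φ s' z) z ≤ θ * (1 - (1/2 : ℝ) ^ k) := by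
        rcases Finset.eq_empty_or_nonempty F' with hE | hNE
        · have : s' = 0 := by rw [hs'def, hE, Finset.sum_empty]
          rw [this, hΦ.2.1 z, dist_self]
          nlinarith
        · exact le_of_lt (hInv.2 F' hNE hF'sub)
      calc dist (Φ s' (Φ τ z)) z
          ≤ dist (Φ s' (Φ τ z)) (Φ s' z) + dist (Φ s' z) z := dist_triangle _ _ _
        _ < ε + θ * (1 - (1/2 : ℝ) ^ k) := by linarith
        _ ≤ θ * (1 - (1/2 : ℝ) ^ (k+1)) := by rw [hεdef, hpowk]; nlinarith
    · have hFsub : F ⊆ Finset.range k := by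
        intro i hi
        have := Finset.mem_range.mp (hFk1 hi)
        exact Finset.mem_range.mpr
          (lt_of_le_of_ne (Nat.lt_succ_iff.mp this) (fun h => hkF (h ▸ hi)))
      have hsum : ∑ i ∈ F, q' i = ∑ i ∈ F, q i :=
        Finset.sum_congr rfl fun i hi => hq'lt i (Finset.mem_range.mp (hFsub hi))
      rw [hsum]
      calc dist (Φ (∑ i ∈ F, q i) z) z < θ * (1 - (1/2 : ℝ) ^ k) :=
            hInv.2 F hF hFsub
        _ ≤ θ * (1 - (1/2 : ℝ) ^ (k+1)) := by rw [hpowk]; nlinarith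

noncomputable def ipSeq (hΦ : IsFlow Φ) (hz : z ∈ recurrentSet Φ) (hθ : 0 < θ) : ℕ → ℝ
  | k => Classical.choose (ip_step Φ z θ hΦ hz hθ k
      (fun i => if h : i < k then ipSeq hΦ hz hθ i else 0))
decreasing_by all_goals exact h

lemma ipSeq_spec (hΦ : IsFlow Φ) (hz : z ∈ recurrentSet Φ) (hθ : 0 < θ) (k : ℕ) :
    0 < ipSeq Φ z θ hΦ hz hθ k ∧
      (IPInv Φ z θ k (fun i => if i < k then ipSeq Φ z θ hΦ hz hθ i else 0) →
        IPInv Φ z θ (k + 1)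
          (Function.update (fun i => if i < k then ipSeq Φ z θ hΦ hz hθ i else 0) k
            (ipSeq Φ z θ hΦ hz hθ k))) := by
  rw [ipSeq]
  simpa using Classical.choose_spec (ip_step Φ z θ hΦ hz hθ k
      (fun i => if h : i < k then ipSeq Φ z θ hΦ hz hθ i else 0))

lemma ipSeq_inv (hΦ : IsFlow Φ) (hz : z ∈ recurrentSet Φ) (hθ : 0 < θ) (k : ℕ) :
    IPInv Φ z θ k (ipSeq Φ z θ hΦ hz hθ) := by
  induction k with
  | zero =>
    refine ⟨fun i hi => absurd hi (Nat.not_lt_zero i), fun F hF hsub => ?_⟩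
    exact absurd (Finset.subset_empty.mp (by simpa using hsub)) hF.ne_empty
  | succ k ih =>
    have h1 : IPInv Φ z θ k (fun i => if i < k then ipSeq Φ z θ hΦ hz hθ i else 0) :=
      ipinv_congr Φ z θ (fun i hi => by simp [hi]) ih
    have h2 := (ipSeq_spec Φ z θ hΦ hz hθ k).2 h1
    refine ipinv_congr Φ z θ (fun i hi => ?_) h2
    rcases Nat.lt_succ_iff_lt_or_eq.mp hi with hi' | rfl
    · rw [Function.update_of_ne (Nat.ne_of_lt hi')]
      simp [hi']
    · rw [Function.update_self]

end IPAux

theorem stmt19 {n : ℕ} (Φ : ℝ → Euc n → Euc n) (hΦ : IsFlow Φ)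
    (z : Euc n) (hz : z ∈ recurrentSet Φ) (θ : ℝ) (hθ : 0 < θ) :
    ∃ p : ℕ → ℝ, (∀ i, 0 < p i) ∧
      ∀ F : Finset ℕ, F.Nonempty →
        0 < ∑ i ∈ F, p i ∧ dist (Φ (∑ i ∈ F, p i) z) z < θ := by
  refine ⟨ipSeq Φ z θ hΦ hz hθ, fun i => (ipSeq_spec Φ z θ hΦ hz hθ i).1,
    fun F hF => ⟨Finset.sum_pos (fun i _ => (ipSeq_spec Φ z θ hΦ hz hθ i).1) hF, ?_⟩⟩
  obtain ⟨k, hk⟩ := F.exists_nat_subset_range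
  have := (ipSeq_inv Φ z θ hΦ hz hθ k).2 F hF hk
  have hpow : (0:ℝ) < (1/2 : ℝ) ^ k := by positivity
  nlinarith
end
end
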